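/- For every set X: (1) a finite set A of prenex complete Boolean terms over X is derivable in the finitary sequent calculus if and only if it is derivable in the infinitary sequent calculus; and (2) for every set-indexed family (t_i)_{i∈ι} of prenex complete Boolean terms over X, the singleton {⋁_{i∈ι} t_i} is derivable in the infinitary sequent calculus if and only if the set {t_i | i ∈ ι} is derivable in the infinitary sequent calculus. -/

import Mathlib

universe u

/-- Prenex complete Boolean terms over a set `X`: literals `x`, `¬x` for `x ∈ X`, closed under
set-indexed conjunctions and disjunctions. -/
inductive PTerm (X : Type u) : Type (u + 1)
  | var : X → PTerm X
  | nvar : X → PTerm X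
  | conj : {ι : Type u} → (ι → PTerm X) → PTerm X
  | disj : {ι : Type u} → (ι → PTerm X) → PTerm X

/-- The finitary one-sided sequent calculus, deriving (finite) sets of prenex terms. -/
inductive FDer {X : Type u} : Set (PTerm X) → Prop
  | id {A : Set (PTerm X)} (x : X) : PTerm.var x ∈ A → PTerm.nvar x ∈ A → FDer A
  | conj {A : Set (PTerm X)} {ι : Type u} (t : ι → PTerm X) :
      PTerm.conj t ∈ A → (∀ i : ι, FDer (insert (t i) A)) → FDer A
  | disj {A : Set (PTerm X)} {ι : Type u} (t : ι → PTerm X) (i : ι) :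
      PTerm.disj t ∈ A → FDer (insert (t i) A) → FDer A

/-- The infinitary one-sided sequent calculus, deriving arbitrary sets of prenex terms. -/
inductive IDer {X : Type u} : Set (PTerm X) → Prop
  | id {A : Set (PTerm X)} (x : X) : PTerm.var x ∈ A → PTerm.nvar x ∈ A → IDer A
  | conj {A : Set (PTerm X)} {ι : Type u} (t : ι → PTerm X) :
      PTerm.conj t ∈ A → (∀ i : ι, IDer (insert (t i) A)) → IDer A
  | disj {A : Set (PTerm X)} {ι : Type u} (t : ι → PTerm X) :
      PTerm.disj t ∈ A → IDer (A ∪ Set.range t) → IDer A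

/-!
A finitary derivation is an infinitary one, since the infinitary disjunction rule may add all
disjuncts at once. Conversely, an infinitary derivation of `B` is turned into a finitary
derivation of any `A` from which every member of `B` is reached by repeatedly passing from a
disjunction in `A` to one of its disjuncts: each rule of the infinitary derivation only inspects
finitely many (in fact at most two) terms of `B`, and the finitary disjunction rule recovers them
from `A` one at a time.

For (2), the disjunction `⋁ t` can always be traded for the set of its disjuncts in an
infinitary derivation: where the derivation applies the disjunction rule to `⋁ t` it already
has all disjuncts at hand.
-/

variable {X : Type u}

namespace PTerm

/-- The terms reachable from `A` by repeatedly passing from a disjunction to a disjunct. -/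
inductive DisjClosure (A : Set (PTerm X)) : PTerm X → Prop
  | base {a : PTerm X} : a ∈ A → DisjClosure A a
  | disjunct {ι : Type u} {t : ι → PTerm X} (i : ι) :
      DisjClosure A (PTerm.disj t) → DisjClosure A (t i)

theorem DisjClosure.mono {A B : Set (PTerm X)} (hAB : A ⊆ B) {a : PTerm X}
    (h : DisjClosure A a) : DisjClosure B a := by
  induction h with
  | base ha => exact .base (hAB ha)
  | disjunct i _ ih => exact .disjunct i ih

theorem subset_disjClosure (A : Set (PTerm X)) : A ⊆ DisjClosure A :=
  fun _ => DisjClosure.base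

end PTerm

open PTerm

theorem IDer.mono {A B : Set (PTerm X)} (h : IDer A) (hAB : A ⊆ B) : IDer B := by
  induction h generalizing B with
  | id x hv hn => exact .id x (hAB hv) (hAB hn)
  | conj t ht _ ih => exact .conj t (hAB ht) fun i => ih i (Set.insert_subset_insert hAB)
  | disj t ht _ ih => exact .disj t (hAB ht) (ih (Set.union_subset_union_left _ hAB))

theorem FDer.mono {A B : Set (PTerm X)} (h : FDer A) (hAB : A ⊆ B) : FDer B := by
  induction h generalizing B with
  | id x hv hn => exact .id x (hAB hv) (hAB hn)
  | conj t ht _ ih => exact .conj t (hAB ht) fun i => ih i (Set.insert_subset_insert hAB)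
  | disj t i ht _ ih => exact .disj t i (hAB ht) (ih (Set.insert_subset_insert hAB))

theorem FDer.toIDer {A : Set (PTerm X)} (h : FDer A) : IDer A := by
  induction h with
  | id x hv hn => exact .id x hv hn
  | conj t ht _ ih => exact .conj t ht ih
  | disj t i ht _ ih =>
      exact .disj t ht (ih.mono (Set.insert_subset (Or.inr ⟨i, rfl⟩) Set.subset_union_left))

theorem FDer.of_insert_of_disjClosure {A : Set (PTerm X)} {b : PTerm X}
    (hb : DisjClosure A b) (h : FDer (insert b A)) : FDer A := by
  induction hb with
  | base ha => rwa [Set.insert_eq_of_mem ha] at h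
  | disjunct i _ ih =>
      exact ih (.disj _ i (Set.mem_insert _ _)
        (h.mono (Set.insert_subset_insert (Set.subset_insert _ _))))

theorem IDer.toFDer_of_subset_disjClosure {B : Set (PTerm X)} (h : IDer B) :
    ∀ A : Set (PTerm X), B ⊆ DisjClosure A → FDer A := by
  induction h with
  | id x hv hn =>
      intro A hBA
      refine .of_insert_of_disjClosure (hBA hn) ?_
      refine .of_insert_of_disjClosure ((hBA hv).mono (Set.subset_insert _ _)) ?_
      exact .id x (Set.mem_insert _ _) (Set.mem_insert_of_mem _ (Set.mem_insert _ _))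
  | conj t ht _ ih =>
      intro A hBA
      refine .of_insert_of_disjClosure (hBA ht) (.conj t (Set.mem_insert _ _) fun i => ?_)
      refine ih i _ (Set.insert_subset (.base (Set.mem_insert _ _)) fun b hb => ?_)
      exact (hBA hb).mono ((Set.subset_insert _ _).trans (Set.subset_insert _ _))
  | disj t ht _ ih =>
      intro A hBA
      refine ih A (Set.union_subset hBA ?_)
      rintro _ ⟨i, rfl⟩
      exact .disjunct i (hBA ht)

theorem IDer.toFDer {A : Set (PTerm X)} (h : IDer A) : FDer A :=
  h.toFDer_of_subset_disjClosure A (subset_disjClosure A)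

theorem fDer_iff_iDer {A : Set (PTerm X)} : FDer A ↔ IDer A :=
  ⟨FDer.toIDer, IDer.toFDer⟩

/-- Inversion of the disjunction rule; `C` covers the part of `B` other than `⋁ t`. -/
theorem IDer.disj_inversion {ι : Type u} {t : ι → PTerm X} {B : Set (PTerm X)} (h : IDer B) :
    ∀ C : Set (PTerm X), B ⊆ insert (PTerm.disj t) C → IDer (C ∪ Set.range t) := by
  induction h with
  | id x hv hn =>
      intro C hBC
      exact .id x (.inl ((hBC hv).resolve_left nofun)) (.inl ((hBC hn).resolve_left nofun))
  | conj s hs _ ih =>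
      intro C hBC
      refine .conj s (.inl ((hBC hs).resolve_left nofun)) fun i => ?_
      rw [← Set.insert_union]
      exact ih i _ (Set.insert_subset_insert hBC |>.trans (Set.insert_comm _ _ _).subset)
  | disj s hs _ ih =>
      intro C hBC
      have hder : IDer (C ∪ Set.range s ∪ Set.range t) :=
        ih _ (Set.union_subset (hBC.trans (Set.insert_subset_insert Set.subset_union_left))
          (Set.subset_union_right.trans (Set.subset_insert _ _)))
      by_cases hst : PTerm.disj s = PTerm.disj t
      · obtain ⟨rfl, hst⟩ := PTerm.disj.inj hst
        rwa [eq_of_heq hst, Set.union_assoc, Set.union_self] at hder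
      · exact .disj s (.inl ((hBC hs).resolve_left hst))
          (hder.mono (Set.union_right_comm _ _ _).subset)

theorem iDer_singleton_disj_iff {ι : Type u} {t : ι → PTerm X} :
    IDer {PTerm.disj t} ↔ IDer (Set.range t) := by
  refine ⟨fun h => ?_, fun h => .disj t rfl (h.mono Set.subset_union_right)⟩
  simpa using h.disj_inversion ∅ (by simp)

/-- (1) For finite sets of terms, the finitary and infinitary sequent calculi derive the same
sets; (2) a singleton `{⋁ᵢ tᵢ}` is derivable in the infinitary calculus iff `{tᵢ | i}` is. -/
theorem stmt_19 {X : Type u} :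
    (∀ A : Set (PTerm X), A.Finite → (FDer A ↔ IDer A)) ∧
    (∀ (ι : Type u) (t : ι → PTerm X), IDer {PTerm.disj t} ↔ IDer (Set.range t)) :=
  ⟨fun _ _ => fDer_iff_iDer, fun _ _ => iDer_singleton_disj_iff⟩
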